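/- arXiv:1710.00174 — 3 statements merged into one kernel-verified Lean document; each statement's English description precedes it below -/
import Mathlib

section
/- The pointwise minimum of the two functions r₁(ρ) = (1/2)·log(1 + A·ρ/(ρ+a)) (in variable ρ) and r₂(p) = (1/2)·log(1 + B + C·p) (in variable p), viewed as a function of (p,ρ) on {p ≥ 0, 0 ≤ ρ ≤ 1}, is concave, where A, B, C ≥ 0 and a > 0 are constants. -/
open Set Real

private lemma log_comp_concave {s : Set ℝ} {g : ℝ → ℝ} (hg : ConcaveOn ℝ s g)
    (hpos : ∀ x ∈ s, 0 < g x) : ConcaveOn ℝ s fun x => Real.log (g x) := by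
  refine ⟨hg.1, fun x hx y hy u v hu hv huv => ?_⟩
  have hgx := hpos x hx
  have hgy := hpos y hy
  have hmix : 0 < u • g x + v • g y := by
    rcases eq_or_lt_of_le hu with h | h
    · have hv1 : v = 1 := by linarith
      simp [← h, hv1, hgy]
    · have h1 : 0 < u • g x := by simpa [smul_eq_mul] using mul_pos h hgx
      have h2 : 0 ≤ v • g y := by simpa [smul_eq_mul] using mul_nonneg hv hgy.le
      linarith
  calc u • Real.log (g x) + v • Real.log (g y)
      ≤ Real.log (u • g x + v • g y) :=
        (strictConcaveOn_log_Ioi.concaveOn).2 hgx hgy hu hv huv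
    _ ≤ Real.log (g (u • x + v • y)) :=
        Real.log_le_log hmix (hg.2 hx hy hu hv huv)

theorem stmt_5 (A B C a : ℝ) (hA : 0 ≤ A) (hB : 0 ≤ B) (hC : 0 ≤ C) (ha : 0 < a) :
    ConcaveOn ℝ {q : ℝ × ℝ | 0 ≤ q.1 ∧ q.2 ∈ Set.Icc (0 : ℝ) 1}
      (fun q : ℝ × ℝ =>
        min ((1 / 2) * Real.log (1 + A * q.2 / (q.2 + a)))
            ((1 / 2) * Real.log (1 + B + C * q.1))) := by
  set S : Set (ℝ × ℝ) := {q : ℝ × ℝ | 0 ≤ q.1 ∧ q.2 ∈ Set.Icc (0 : ℝ) 1} with hS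
  have hSconv : Convex ℝ S := by
    have : S = (Ici (0:ℝ)) ×ˢ (Icc (0:ℝ) 1) := by ext q; simp [hS, Set.mem_prod]
    rw [this]; exact (convex_Ici 0).prod (convex_Icc 0 1)
  -- convexity of x ↦ x⁻¹ on Ioi 0
  have hinv : ConvexOn ℝ (Ioi (0:ℝ)) (fun x : ℝ => x⁻¹) := by
    have := (strictConvexOn_zpow (m := -1) (by decide) (by decide)).convexOn
    simpa using this
  -- convexity of ρ ↦ (ρ + a)⁻¹ on Icc 0 1
  have haff : ConvexOn ℝ (Icc (0:ℝ) 1) (fun ρ : ℝ => (ρ + a)⁻¹) := by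
    have h := hinv.comp_affineMap (AffineMap.id ℝ ℝ + AffineMap.const ℝ ℝ a)
    have h' : ConvexOn ℝ ((AffineMap.id ℝ ℝ + AffineMap.const ℝ ℝ a) ⁻¹' Ioi 0)
        (fun ρ : ℝ => (ρ + a)⁻¹) := h
    refine h'.subset (fun x hx => ?_) (convex_Icc 0 1)
    have hxa : (AffineMap.id ℝ ℝ + AffineMap.const ℝ ℝ a) x = x + a := by simp
    simp only [Set.mem_preimage, Set.mem_Ioi, hxa]
    have := hx.1
    linarith
  -- concavity of the inner function g ρ = 1 + A ρ / (ρ + a) on Icc 0 1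
  have hg : ConcaveOn ℝ (Icc (0:ℝ) 1) (fun ρ : ℝ => 1 + A * ρ / (ρ + a)) := by
    have h0 := ((haff.smul (mul_nonneg hA ha.le)).neg.add_const (1 + A))
    refine h0.congr fun ρ hρ => ?_
    have hρa : (0:ℝ) < ρ + a := by have := hρ.1; linarith
    simp only [Pi.add_apply, Pi.neg_apply, smul_eq_mul, Pi.smul_apply]
    field_simp
    ring
  have hpos : ∀ ρ ∈ Icc (0:ℝ) 1, 0 < 1 + A * ρ / (ρ + a) := by
    intro ρ hρ
    have hρa : 0 < ρ + a := by have := hρ.1; linarith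
    have : 0 ≤ A * ρ / (ρ + a) :=
      div_nonneg (mul_nonneg hA hρ.1) hρa.le
    linarith
  have hlog : ConcaveOn ℝ (Icc (0:ℝ) 1)
      (fun ρ : ℝ => Real.log (1 + A * ρ / (ρ + a))) := log_comp_concave hg hpos
  have hr1 : ConcaveOn ℝ (Icc (0:ℝ) 1)
      (fun ρ : ℝ => (1 / 2) * Real.log (1 + A * ρ / (ρ + a))) := by
    have := hlog.smul (by norm_num : (0:ℝ) ≤ 1/2)
    simpa [smul_eq_mul] using this
  -- concavity of r₂ on Ici 0 (affine inside log)
  have hgin2 : ConcaveOn ℝ (Ici (0:ℝ)) (fun p : ℝ => 1 + B + C * p) := by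
    refine ⟨convex_Ici 0, fun x _ y _ u v hu hv huv => ?_⟩
    simp only [smul_eq_mul]
    nlinarith
  have hpos2 : ∀ p ∈ Ici (0:ℝ), 0 < 1 + B + C * p := by
    intro p hp
    have : 0 ≤ C * p := mul_nonneg hC hp
    linarith
  have hr2 : ConcaveOn ℝ (Ici (0:ℝ))
      (fun p : ℝ => (1 / 2) * Real.log (1 + B + C * p)) := by
    have := (log_comp_concave hgin2 hpos2).smul (by norm_num : (0:ℝ) ≤ 1/2)
    simpa [smul_eq_mul] using this
  -- lift to the product set
  have hF1 : ConcaveOn ℝ S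
      (fun q : ℝ × ℝ => (1 / 2) * Real.log (1 + A * q.2 / (q.2 + a))) := by
    have h := hr1.comp_linearMap (LinearMap.snd ℝ ℝ ℝ)
    exact h.subset (fun q hq => hq.2) hSconv
  have hF2 : ConcaveOn ℝ S
      (fun q : ℝ × ℝ => (1 / 2) * Real.log (1 + B + C * q.1)) := by
    have h := hr2.comp_linearMap (LinearMap.fst ℝ ℝ ℝ)
    exact h.subset (fun q hq => hq.1) hSconv
  exact (hF1.inf hF2).congr fun q _ => rfl
end

section
/- Let ω > 0, r₁, r₂ > 0, A₁, A₂ > 0. The function f(z₁,z₂) = log(ω + (r₁r₂/((A₁+z₁)(A₂+z₂))) / (1 + r₁/(A₁+z₁) + r₂/(A₂+z₂))) is convex on the domain {(z₁,z₂) : z₁ > -A₁, z₂ > -A₂}. -/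
/-!
Put `u = A₁ + z₁`, `v = A₂ + z₂`, `p = u + r₁`, `q = v + r₂` and `c = r₁ r₂`. Clearing
denominators, the argument of the logarithm is `ω + c / (p q - c)`, so the function is
`ρ (κ (log p + log q))` with `ρ t = log (ω + c e^{-t})` convex and decreasing on `ℝ` and
`κ x = log (e^x - c)` concave and increasing for `x > log c`. Since `log p + log q` is concave
and exceeds `log c` on the domain, the composition is convex.
-/

open Set Real

section Composition

variable {𝕜 E β α : Type*} [Semiring 𝕜] [PartialOrder 𝕜]
  [AddCommMonoid E] [AddCommMonoid β] [PartialOrder β] [AddCommMonoid α] [PartialOrder α]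
  [SMul 𝕜 E] [SMul 𝕜 β] [SMul 𝕜 α] {s : Set E} {t : Set β} {f : E → β} {g : β → α}

theorem ConcaveOn.comp_of_mapsTo (hg : ConcaveOn 𝕜 t g) (hf : ConcaveOn 𝕜 s f)
    (hg' : MonotoneOn g t) (hst : MapsTo f s t) : ConcaveOn 𝕜 s (g ∘ f) :=
  ⟨hf.1, fun _ hx _ hy _ _ ha hb hab =>
    (hg.2 (hst hx) (hst hy) ha hb hab).trans <|
      hg' (hg.1 (hst hx) (hst hy) ha hb hab) (hst (hf.1 hx hy ha hb hab)) (hf.2 hx hy ha hb hab)⟩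

theorem ConvexOn.comp_concaveOn_of_mapsTo (hg : ConvexOn 𝕜 t g) (hf : ConcaveOn 𝕜 s f)
    (hg' : AntitoneOn g t) (hst : MapsTo f s t) : ConvexOn 𝕜 s (g ∘ f) :=
  ⟨hf.1, fun _ hx _ hy _ _ ha hb hab =>
    (hg' (hg.1 (hst hx) (hst hy) ha hb hab) (hst (hf.1 hx hy ha hb hab))
      (hf.2 hx hy ha hb hab)).trans (hg.2 (hst hx) (hst hy) ha hb hab)⟩

end Composition

namespace Real

theorem concaveOn_log_const_add (a : ℝ) : ConcaveOn ℝ (Ioi (-a)) (fun x => log (a + x)) := by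
  have hpre : (fun z => a + z) ⁻¹' Ioi 0 = Ioi (-a) := by
    ext x
    simp [neg_lt_iff_pos_add']
  have h := strictConcaveOn_log_Ioi.concaveOn.translate_right a
  rw [hpre] at h
  exact h

theorem concaveOn_log_add_fst_add_log_add_snd (a b : ℝ) :
    ConcaveOn ℝ {z : ℝ × ℝ | -a < z.1 ∧ -b < z.2} (fun z => log (a + z.1) + log (b + z.2)) := by
  have hconv : Convex ℝ {z : ℝ × ℝ | -a < z.1 ∧ -b < z.2} :=
    (convex_Ioi (-a)).prod (convex_Ioi (-b))
  exact (((concaveOn_log_const_add a).comp_linearMap (LinearMap.fst ℝ ℝ ℝ)).subset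
    (fun z hz => hz.1) hconv).add
    (((concaveOn_log_const_add b).comp_linearMap (LinearMap.snd ℝ ℝ ℝ)).subset
    (fun z hz => hz.2) hconv)

theorem hasDerivAt_log_exp_sub {c x : ℝ} (hx : c < exp x) :
    HasDerivAt (fun x => log (exp x - c)) (exp x / (exp x - c)) x :=
  ((hasDerivAt_exp x).sub_const c).log (sub_pos.2 hx).ne'

theorem concaveOn_log_exp_sub {c : ℝ} (hc : 0 < c) :
    ConcaveOn ℝ (Ioi (log c)) (fun x => log (exp x - c)) := by
  have hlt {x : ℝ} (hx : x ∈ Ioi (log c)) : c < exp x := (log_lt_iff_lt_exp hc).1 hx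
  refine AntitoneOn.concaveOn_of_deriv (convex_Ioi _)
    (fun x hx => (hasDerivAt_log_exp_sub (hlt hx)).continuousAt.continuousWithinAt) ?_ ?_ <;>
    rw [interior_Ioi]
  · exact fun x hx => (hasDerivAt_log_exp_sub (hlt hx)).differentiableAt.differentiableWithinAt
  intro x hx y hy hxy
  have hx' : 0 < exp x - c := sub_pos.2 (hlt hx)
  have hy' : 0 < exp y - c := sub_pos.2 (hlt hy)
  rw [(hasDerivAt_log_exp_sub (hlt hx)).deriv, (hasDerivAt_log_exp_sub (hlt hy)).deriv,
    div_le_div_iff₀ hy' hx']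
  nlinarith [exp_le_exp.2 hxy]

theorem monotoneOn_log_exp_sub {c : ℝ} (hc : 0 < c) :
    MonotoneOn (fun x => log (exp x - c)) (Ioi (log c)) := fun x hx y _ hxy =>
  log_le_log (sub_pos.2 ((log_lt_iff_lt_exp hc).1 hx)) (by gcongr)

theorem hasDerivAt_log_add_mul_exp_neg {ω c : ℝ} (hω : 0 < ω) (hc : 0 ≤ c) (t : ℝ) :
    HasDerivAt (fun t => log (ω + c * exp (-t))) (-(c * exp (-t)) / (ω + c * exp (-t))) t := by
  have h : HasDerivAt (fun t => ω + c * exp (-t)) (-(c * exp (-t))) t := by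
    simpa using (((hasDerivAt_neg t).exp).const_mul c).const_add ω
  exact h.log (by positivity)

theorem convexOn_log_add_mul_exp_neg {ω c : ℝ} (hω : 0 < ω) (hc : 0 ≤ c) :
    ConvexOn ℝ univ (fun t => log (ω + c * exp (-t))) := by
  refine Monotone.convexOn_univ_of_deriv
    (fun t => (hasDerivAt_log_add_mul_exp_neg hω hc t).differentiableAt) fun s t hst => ?_
  rw [(hasDerivAt_log_add_mul_exp_neg hω hc s).deriv,
    (hasDerivAt_log_add_mul_exp_neg hω hc t).deriv,
    div_le_div_iff₀ (by positivity) (by positivity)]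
  have := mul_le_mul_of_nonneg_left (exp_le_exp.2 (neg_le_neg hst)) (mul_nonneg hc hω.le)
  nlinarith

theorem antitone_log_add_mul_exp_neg {ω c : ℝ} (hω : 0 < ω) (hc : 0 ≤ c) :
    Antitone (fun t => log (ω + c * exp (-t))) := fun s t hst =>
  log_le_log (by positivity) (by gcongr)

end Real

theorem stmt_6_general (ω r₁ r₂ A₁ A₂ : ℝ) (hω : 0 < ω) (hr₁ : 0 < r₁) (hr₂ : 0 < r₂) :
    ConvexOn ℝ {z : ℝ × ℝ | -A₁ < z.1 ∧ -A₂ < z.2}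
      (fun z : ℝ × ℝ =>
        Real.log (ω + (r₁ * r₂ / ((A₁ + z.1) * (A₂ + z.2))) /
          (1 + r₁ / (A₁ + z.1) + r₂ / (A₂ + z.2)))) := by
  set D := {z : ℝ × ℝ | -A₁ < z.1 ∧ -A₂ < z.2}
  have hc : 0 < r₁ * r₂ := mul_pos hr₁ hr₂
  have hsub : D ⊆ {z | -(A₁ + r₁) < z.1 ∧ -(A₂ + r₂) < z.2} :=
    fun z hz => ⟨by linarith [hz.1], by linarith [hz.2]⟩
  have hℓ := (concaveOn_log_add_fst_add_log_add_snd (A₁ + r₁) (A₂ + r₂)).subset hsub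
    ((convex_Ioi _).prod (convex_Ioi _))
  have hmaps : MapsTo (fun z : ℝ × ℝ => log (A₁ + r₁ + z.1) + log (A₂ + r₂ + z.2)) D
      (Ioi (log (r₁ * r₂))) := fun z hz => by
    have hu : 0 < A₁ + z.1 := by linarith [hz.1]
    have hv : 0 < A₂ + z.2 := by linarith [hz.2]
    have hprod : r₁ * r₂ < (A₁ + r₁ + z.1) * (A₂ + r₂ + z.2) := by nlinarith
    exact (log_lt_log hc hprod).trans_eq (log_mul (by linarith) (by linarith))
  refine ((convexOn_log_add_mul_exp_neg hω hc.le).comp_concaveOn_of_mapsTo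
    ((concaveOn_log_exp_sub hc).comp_of_mapsTo hℓ (monotoneOn_log_exp_sub hc) hmaps)
    ((antitone_log_add_mul_exp_neg hω hc.le).antitoneOn univ) (mapsTo_univ _ _)).congr
    fun z hz => ?_
  have hu : 0 < A₁ + z.1 := by linarith [hz.1]
  have hv : 0 < A₂ + z.2 := by linarith [hz.2]
  have hW : 0 < (A₁ + r₁ + z.1) * (A₂ + r₂ + z.2) - r₁ * r₂ := by nlinarith
  simp only [Function.comp_apply]
  rw [← log_mul (by linarith) (by linarith), exp_log (by nlinarith), exp_neg, exp_log hW]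
  congr 2
  field_simp
  ring

theorem stmt_6 (ω r₁ r₂ A₁ A₂ : ℝ) (hω : 0 < ω) (hr₁ : 0 < r₁) (hr₂ : 0 < r₂)
    (hA₁ : 0 < A₁) (hA₂ : 0 < A₂) :
    ConvexOn ℝ {z : ℝ × ℝ | -A₁ < z.1 ∧ -A₂ < z.2}
      (fun z : ℝ × ℝ =>
        Real.log (ω + (r₁ * r₂ / ((A₁ + z.1) * (A₂ + z.2))) /
          (1 + r₁ / (A₁ + z.1) + r₂ / (A₂ + z.2)))) :=
  stmt_6_general ω r₁ r₂ A₁ A₂ hω hr₁ hr₂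
end

section
/- Let ω > 0, r₁, r₂ > 0, A₁, A₂ > 0, and set X₀ = A₁A₂ + r₁A₂ + r₂A₁. Then for all z₁ > -A₁ and z₂ > -A₂: log(ω + (r₁r₂/((A₁+z₁)(A₂+z₂)))/(1 + r₁/(A₁+z₁) + r₂/(A₂+z₂))) ≥ log(ω + (r₁r₂/(A₁A₂))/(1 + r₁/A₁ + r₂/A₂)) − (1/X₀ − 1/(X₀ + r₁r₂/ω))·[(A₂+r₂)z₁ + (A₁+r₁)z₂]. -/
open Real Set

/-! Write `X = (A₁ + z₁)(A₂ + z₂) + r₁(A₂ + z₂) + r₂(A₁ + z₁) = (A₁ + r₁ + z₁)(A₂ + r₂ + z₂) - r₁r₂`.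
The left side is `g X` with `g x = log (ω + r₁r₂ / x)`, convex and decreasing for `x > 0`, and the
right side is the tangent plane of `g ∘ X` at `z = 0`. Along the segment `t ↦ t • z`, `X` is a
quadratic with `X'' = 2 z₁ z₂` and `X'² - 4 z₁ z₂ (X + r₁r₂)` a perfect square; this bound on
`X''` by `X'²` keeps `(g ∘ X)'' = g'' X'² + g' X''` nonnegative, so `g ∘ X` lies above its tangent
at `t = 0`. -/

theorem add_deriv_mul_le_of_hasDerivAt2_nonneg {f f' f'' : ℝ → ℝ} {a b : ℝ} (hab : a < b)
    (hf : ∀ t ∈ Icc a b, HasDerivAt f (f' t) t) (hf' : ∀ t ∈ Icc a b, HasDerivAt f' (f'' t) t)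
    (hf'' : ∀ t ∈ Icc a b, 0 ≤ f'' t) :
    f a + f' a * (b - a) ≤ f b := by
  have hconvex : ConvexOn ℝ (Icc a b) f := by
    refine convexOn_of_hasDerivWithinAt2_nonneg (f' := f') (f'' := f'') (convex_Icc a b)
      (fun t ht => (hf t ht).continuousAt.continuousWithinAt) ?_ ?_ ?_ <;>
    rw [interior_Icc] <;> intro t ht
    · exact (hf t (Ioo_subset_Icc_self ht)).hasDerivWithinAt
    · exact (hf' t (Ioo_subset_Icc_self ht)).hasDerivWithinAt
    · exact hf'' t (Ioo_subset_Icc_self ht)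
  have hslope := hconvex.le_slope_of_hasDerivAt (left_mem_Icc.2 hab.le) (right_mem_Icc.2 hab.le)
    hab (hf a (left_mem_Icc.2 hab.le))
  rw [slope_def_field, le_div_iff₀ (sub_pos.2 hab)] at hslope
  linarith

lemma hasDerivAt_log_add_div {ω c x : ℝ} (hx : x ≠ 0) (hy : ω * x + c ≠ 0) :
    HasDerivAt (fun y => log (ω + c / y)) (-c / (x * (ω * x + c))) x := by
  have hω : ω + c / x ≠ 0 := by
    rwa [← mul_ne_zero_iff_right hx, add_mul, div_mul_cancel₀ _ hx]
  refine ((((hasDerivAt_inv hx).const_mul c).const_add ω).log ?_).congr_deriv ?_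
  · simpa [div_eq_mul_inv] using hω
  · field_simp

lemma hasDerivAt_neg_div_mul_mul_add {ω c x : ℝ} (hx : x ≠ 0) (hy : ω * x + c ≠ 0) :
    HasDerivAt (fun y => -c / (y * (ω * y + c)))
      (c * (2 * ω * x + c) / (x * (ω * x + c)) ^ 2) x := by
  have hd : HasDerivAt (fun y => y * (ω * y + c)) (1 * (ω * x + c) + x * (ω * 1)) x :=
    (hasDerivAt_id x).mul (((hasDerivAt_id x).const_mul ω).add_const c)
  refine ((hasDerivAt_const x (-c)).div hd (mul_ne_zero hx hy)).congr_deriv ?_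
  field_simp
  ring

lemma mul_mul_add_le_mul_sq {ω c X V k : ℝ} (hω : 0 ≤ ω) (hc : 0 ≤ c) (hX : 0 ≤ X)
    (hV : 4 * k * (X + c) ≤ V ^ 2) :
    2 * k * X * (ω * X + c) ≤ (2 * ω * X + c) * V ^ 2 := by
  rcases le_or_gt k 0 with hk | hk
  · calc 2 * k * X * (ω * X + c)
        ≤ 0 := mul_nonpos_of_nonpos_of_nonneg (mul_nonpos_of_nonpos_of_nonneg (by linarith) hX)
          (by positivity)
      _ ≤ (2 * ω * X + c) * V ^ 2 := by positivity
  · have hgap : 0 ≤ k * (6 * ω * X ^ 2 + 2 * c * X + 8 * ω * c * X + 4 * c ^ 2) := by positivity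
    nlinarith [mul_le_mul_of_nonneg_left hV
      (add_nonneg (mul_nonneg (mul_nonneg zero_le_two hω) hX) hc)]

/-- The expression is `g'' X * V ^ 2 + g' X * (2 * k)` for `g x = log (ω + c / x)`, the second
derivative of `g ∘ X` when `X' = V` and `X'' = 2 * k`. -/
lemma log_add_div_deriv2_nonneg {ω c X V k : ℝ} (hω : 0 < ω) (hc : 0 ≤ c) (hX : 0 < X)
    (hV : 4 * k * (X + c) ≤ V ^ 2) :
    0 ≤ c * (2 * ω * X + c) / (X * (ω * X + c)) ^ 2 * V ^ 2 + -c / (X * (ω * X + c)) * (2 * k) := by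
  have hY : 0 < ω * X + c := by positivity
  have hgap := mul_mul_add_le_mul_sq hω.le hc hX.le hV
  have hsplit :
      c * (2 * ω * X + c) / (X * (ω * X + c)) ^ 2 * V ^ 2 + -c / (X * (ω * X + c)) * (2 * k)
        = c * ((2 * ω * X + c) * V ^ 2 - 2 * k * X * (ω * X + c)) / (X * (ω * X + c)) ^ 2 := by
    field_simp
    ring
  rw [hsplit]
  exact div_nonneg (mul_nonneg hc (sub_nonneg.2 hgap)) (sq_nonneg _)

theorem log_add_div_comp_tangent_le {ω c k a b : ℝ} {X X' : ℝ → ℝ} (hab : a < b) (hω : 0 < ω)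
    (hc : 0 ≤ c) (hX : ∀ t ∈ Icc a b, 0 < X t) (hXd : ∀ t ∈ Icc a b, HasDerivAt X (X' t) t)
    (hX'd : ∀ t ∈ Icc a b, HasDerivAt X' (2 * k) t)
    (hdisc : ∀ t ∈ Icc a b, 4 * k * (X t + c) ≤ X' t ^ 2) :
    log (ω + c / X a) + -c / (X a * (ω * X a + c)) * X' a * (b - a) ≤ log (ω + c / X b) := by
  have hY : ∀ t ∈ Icc a b, ω * X t + c ≠ 0 := fun t ht => by
    have := hX t ht; positivity
  refine add_deriv_mul_le_of_hasDerivAt2_nonneg hab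
    (fun t ht => (hasDerivAt_log_add_div (hX t ht).ne' (hY t ht)).comp t (hXd t ht))
    (fun t ht => ((hasDerivAt_neg_div_mul_mul_add (hX t ht).ne' (hY t ht)).comp t
      (hXd t ht)).mul (hX'd t ht)) fun t ht => ?_
  have h := log_add_div_deriv2_nonneg hω hc (hX t ht) (hdisc t ht)
  simp only [Function.comp_apply]
  linarith

theorem log_add_div_mul_sub_tangent_le {ω c p q z₁ z₂ : ℝ} (hω : 0 < ω) (hc : 0 ≤ c)
    (hX : ∀ t ∈ Icc (0 : ℝ) 1, 0 < (p + t * z₁) * (q + t * z₂) - c) :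
    log (ω + c / (p * q - c)) + -c / ((p * q - c) * (ω * (p * q - c) + c)) * (z₁ * q + p * z₂)
      ≤ log (ω + c / ((p + z₁) * (q + z₂) - c)) := by
  have hXd (t : ℝ) : HasDerivAt (fun s => (p + s * z₁) * (q + s * z₂) - c)
      (z₁ * (q + t * z₂) + (p + t * z₁) * z₂) t := by
    have hp : HasDerivAt (fun s => p + s * z₁) z₁ t := by
      simpa using ((hasDerivAt_id t).mul_const z₁).const_add p
    have hq : HasDerivAt (fun s => q + s * z₂) z₂ t := by
      simpa using ((hasDerivAt_id t).mul_const z₂).const_add q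
    exact (hp.mul hq).sub_const c
  have hX'd (t : ℝ) : HasDerivAt (fun s => z₁ * (q + s * z₂) + (p + s * z₁) * z₂)
      (2 * (z₁ * z₂)) t := by
    have := ((((hasDerivAt_id t).mul_const z₂).const_add q).const_mul z₁).add
      ((((hasDerivAt_id t).mul_const z₁).const_add p).mul_const z₂)
    simp only [id, one_mul] at this
    exact this.congr_deriv (by ring)
  have h := log_add_div_comp_tangent_le zero_lt_one hω hc hX (fun t _ => hXd t)
    (fun t _ => hX'd t) fun t _ => by
      nlinarith [sq_nonneg (z₁ * (q + t * z₂) - (p + t * z₁) * z₂)]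
  simpa using h

lemma div_div_one_add_div_add_div {a b r₁ r₂ : ℝ} (ha : a ≠ 0) (hb : b ≠ 0) :
    r₁ * r₂ / (a * b) / (1 + r₁ / a + r₂ / b) = r₁ * r₂ / ((a + r₁) * (b + r₂) - r₁ * r₂) := by
  rw [show 1 + r₁ / a + r₂ / b = ((a + r₁) * (b + r₂) - r₁ * r₂) / (a * b) by field_simp; ring,
    div_div_div_cancel_right₀ (mul_ne_zero ha hb)]

lemma add_mul_pos_of_mem_Icc {a z t : ℝ} (ha : 0 < a) (haz : 0 < a + z) (ht : t ∈ Icc (0 : ℝ) 1) :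
    0 < a + t * z := by
  rcases le_or_gt 0 z with hz | hz
  · nlinarith [ht.1]
  · nlinarith [ht.2]

theorem stmt_9 (ω r₁ r₂ A₁ A₂ : ℝ) (hω : 0 < ω) (hr₁ : 0 < r₁) (hr₂ : 0 < r₂)
    (hA₁ : 0 < A₁) (hA₂ : 0 < A₂)
    (X₀ : ℝ) (hX₀ : X₀ = A₁ * A₂ + r₁ * A₂ + r₂ * A₁) :
    ∀ z₁ z₂ : ℝ, -A₁ < z₁ → -A₂ < z₂ →
      Real.log (ω + (r₁ * r₂ / ((A₁ + z₁) * (A₂ + z₂))) /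
          (1 + r₁ / (A₁ + z₁) + r₂ / (A₂ + z₂))) ≥
        Real.log (ω + (r₁ * r₂ / (A₁ * A₂)) / (1 + r₁ / A₁ + r₂ / A₂)) -
          (1 / X₀ - 1 / (X₀ + r₁ * r₂ / ω)) * ((A₂ + r₂) * z₁ + (A₁ + r₁) * z₂) := by
  intro z₁ z₂ hz₁ hz₂
  have hX₀pq : X₀ = (A₁ + r₁) * (A₂ + r₂) - r₁ * r₂ := by rw [hX₀]; ring
  have hX₀pos : 0 < X₀ := by rw [hX₀]; positivity
  have hslope : 1 / X₀ - 1 / (X₀ + r₁ * r₂ / ω) = r₁ * r₂ / (X₀ * (ω * X₀ + r₁ * r₂)) := by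
    field_simp
    ring
  have hsegment : ∀ t ∈ Icc (0 : ℝ) 1,
      0 < (A₁ + r₁ + t * z₁) * (A₂ + r₂ + t * z₂) - r₁ * r₂ := fun t ht => by
    have h₁ := add_mul_pos_of_mem_Icc hA₁ (z := z₁) (by linarith) ht
    have h₂ := add_mul_pos_of_mem_Icc hA₂ (z := z₂) (by linarith) ht
    nlinarith [mul_pos h₁ h₂]
  have h := log_add_div_mul_sub_tangent_le hω (by positivity) hsegment
  rw [div_div_one_add_div_add_div (by linarith) (by linarith),
    div_div_one_add_div_add_div hA₁.ne' hA₂.ne', hslope, ← hX₀pq]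
  rw [← hX₀pq] at h
  convert h using 3 <;> ring
end
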